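/- arXiv:1711.04712 — 3 statements merged into one kernel-verified Lean document; each statement's English description precedes it below -/
import Mathlib

section
/- Suppose ℝ^d can be covered by N cones of opening angle π/3 with apex at any given point. Then in any k-nearest neighbor graph on a finite set of points in ℝ^d (each point joined by an edge to its k nearest neighbors, ties broken by a fixed rule giving distinct distances), every vertex has degree at most k + N·k. -/
open scoped RealInnerProductSpace

/-- `y j` is among the `k` nearest neighbors of `y i`: fewer than `k` other points
are strictly closer to `y i` than `y j` is. -/
def IsKNN {E : Type*} [MetricSpace E] {m : ℕ} (y : Fin m → E) (k : ℕ) (i j : Fin m) : Prop :=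
  j ≠ i ∧ {l : Fin m | l ≠ i ∧ l ≠ j ∧ dist (y l) (y i) < dist (y j) (y i)}.ncard < k

/-- The `k`-nearest-neighbor graph: `i ~ j` iff one of them is among the `k`
nearest neighbors of the other. -/
def knnGraph {E : Type*} [MetricSpace E] {m : ℕ} (y : Fin m → E) (k : ℕ) :
    SimpleGraph (Fin m) :=
  SimpleGraph.fromRel (fun i j => IsKNN y k i j)

private lemma cone_ineq {E : Type*} [NormedAddCommGroup E] [InnerProductSpace ℝ E]
    (u w v : E) (hv : v ≠ 0)
    (hu : ⟪u, v⟫ ≥ ‖u‖ * ‖v‖ * Real.cos (Real.pi / 6))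
    (hw : ⟪w, v⟫ ≥ ‖w‖ * ‖v‖ * Real.cos (Real.pi / 6))
    (hu0 : 0 < ‖u‖) (hlt : ‖u‖ < ‖w‖) : ‖w - u‖ < ‖w‖ := by
  have hv0 : 0 < ‖v‖ := norm_pos_iff.mpr hv
  have hs3 : Real.sqrt 3 * Real.sqrt 3 = 3 := Real.mul_self_sqrt (by norm_num)
  have hcos : Real.cos (Real.pi / 6) = Real.sqrt 3 / 2 := Real.cos_pi_div_six
  obtain ⟨e, hee, ha', hb'⟩ : ∃ e : E, ‖e‖ = 1 ∧ ‖u‖ * (Real.sqrt 3 / 2) ≤ ⟪u, e⟫ ∧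
      ‖w‖ * (Real.sqrt 3 / 2) ≤ ⟪w, e⟫ := by
    refine ⟨‖v‖⁻¹ • v, ?_, ?_, ?_⟩
    · rw [norm_smul, Real.norm_eq_abs, abs_of_nonneg (inv_nonneg.mpr hv0.le),
        inv_mul_cancel₀ hv0.ne']
    · rw [real_inner_smul_right, le_inv_mul_iff₀ hv0]
      calc ‖v‖ * (‖u‖ * (Real.sqrt 3 / 2)) = ‖u‖ * ‖v‖ * Real.cos (Real.pi / 6) := by
            rw [hcos]; ring
      _ ≤ ⟪u, v⟫ := hu
    · rw [real_inner_smul_right, le_inv_mul_iff₀ hv0]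
      calc ‖v‖ * (‖w‖ * (Real.sqrt 3 / 2)) = ‖w‖ * ‖v‖ * Real.cos (Real.pi / 6) := by
            rw [hcos]; ring
      _ ≤ ⟪w, v⟫ := hw
  set a := ⟪u, e⟫ with ha
  set b := ⟪w, e⟫ with hb
  set u' := u - a • e with hu'
  set w' := w - b • e with hw'
  have hpos_u : (0:ℝ) ≤ ‖u‖ * (Real.sqrt 3 / 2) := by positivity
  have hpos_w : (0:ℝ) ≤ ‖w‖ * (Real.sqrt 3 / 2) := by positivity
  have hnu' : ‖u'‖ ^ 2 = ‖u‖ ^ 2 - a ^ 2 := by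
    rw [hu', norm_sub_sq_real, real_inner_smul_right, norm_smul, Real.norm_eq_abs,
      mul_pow, sq_abs, hee, ← ha]
    ring
  have hnw' : ‖w'‖ ^ 2 = ‖w‖ ^ 2 - b ^ 2 := by
    rw [hw', norm_sub_sq_real, real_inner_smul_right, norm_smul, Real.norm_eq_abs,
      mul_pow, sq_abs, hee, ← hb]
    ring
  have hau : 3 / 4 * ‖u‖ ^ 2 ≤ a ^ 2 :=
    calc 3 / 4 * ‖u‖ ^ 2 = ‖u‖ * (Real.sqrt 3 / 2) * (‖u‖ * (Real.sqrt 3 / 2)) := by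
          linear_combination (-(‖u‖ ^ 2) / 4) * hs3
    _ ≤ a * a := mul_le_mul ha' ha' hpos_u (le_trans hpos_u ha')
    _ = a ^ 2 := (sq a).symm
  have hbw : 3 / 4 * ‖w‖ ^ 2 ≤ b ^ 2 :=
    calc 3 / 4 * ‖w‖ ^ 2 = ‖w‖ * (Real.sqrt 3 / 2) * (‖w‖ * (Real.sqrt 3 / 2)) := by
          linear_combination (-(‖w‖ ^ 2) / 4) * hs3
    _ ≤ b * b := mul_le_mul hb' hb' hpos_w (le_trans hpos_w hb')
    _ = b ^ 2 := (sq b).symm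
  have hu'le : ‖u'‖ ≤ ‖u‖ / 2 := by
    have h1 : ‖u'‖ ^ 2 ≤ (‖u‖ / 2) ^ 2 := by rw [hnu']; nlinarith
    have h2 := Real.sqrt_le_sqrt h1
    rwa [Real.sqrt_sq (norm_nonneg u'), Real.sqrt_sq (by positivity)] at h2
  have hw'le : ‖w'‖ ≤ ‖w‖ / 2 := by
    have h1 : ‖w'‖ ^ 2 ≤ (‖w‖ / 2) ^ 2 := by rw [hnw']; nlinarith
    have h2 := Real.sqrt_le_sqrt h1
    rwa [Real.sqrt_sq (norm_nonneg w'), Real.sqrt_sq (by positivity)] at h2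
  have hiuw : ⟪u, w⟫ = a * b + ⟪u', w'⟫ := by
    simp only [hu', hw', ha, hb, inner_sub_left, inner_sub_right, real_inner_smul_left,
      real_inner_smul_right, real_inner_self_eq_norm_sq, hee, real_inner_comm e u,
      real_inner_comm e w]
    ring
  have hinlb : ⟪u', w'⟫ ≥ -(‖u'‖ * ‖w'‖) := by
    have h3 := abs_real_inner_le_norm u' w'
    cases' abs_le.mp h3 with h1 h2
    linarith
  have hkey : ⟪u, w⟫ ≥ ‖u‖ * ‖w‖ / 2 := by
    have hab : 3 / 4 * (‖u‖ * ‖w‖) ≤ a * b :=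
      calc 3 / 4 * (‖u‖ * ‖w‖) = ‖u‖ * (Real.sqrt 3 / 2) * (‖w‖ * (Real.sqrt 3 / 2)) := by
            linear_combination (-(‖u‖ * ‖w‖) / 4) * hs3
      _ ≤ a * b := mul_le_mul ha' hb' hpos_w (le_trans hpos_u ha')
    have hcs : ‖u'‖ * ‖w'‖ ≤ ‖u‖ / 2 * (‖w‖ / 2) :=
      mul_le_mul hu'le hw'le (norm_nonneg w') (by positivity)
    rw [hiuw]
    have : -(‖u'‖ * ‖w'‖) ≥ -(‖u‖ / 2 * (‖w‖ / 2)) := by linarith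
    calc ‖u‖ * ‖w‖ / 2 = 3 / 4 * (‖u‖ * ‖w‖) + -(‖u‖ / 2 * (‖w‖ / 2)) := by ring
    _ ≤ a * b + ⟪u', w'⟫ := add_le_add hab (le_trans (by linarith) hinlb)
  have hsq : ‖w - u‖ ^ 2 < ‖w‖ ^ 2 := by
    rw [norm_sub_sq_real, real_inner_comm]
    nlinarith
  exact lt_of_pow_lt_pow_left₀ 2 (norm_nonneg w) hsq
private lemma max_count {m k : ℕ} {S : Set (Fin m)} {g : Fin m → ℝ} {P : Fin m → Set (Fin m)}
    (h : ∀ j ∈ S, (∀ l ∈ S, g l ≤ g j) → S \ {j} ⊆ P j ∧ (P j).ncard < k) : S.ncard ≤ k := by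
  rcases S.eq_empty_or_nonempty with rfl | hne
  · simp
  obtain ⟨j, hjS, hmax⟩ := Set.exists_max_image S g (Set.toFinite S) hne
  obtain ⟨hsub, hlt⟩ := h j hjS hmax
  have h1 : (S \ {j}).ncard ≤ (P j).ncard := Set.ncard_le_ncard hsub (Set.toFinite _)
  have h2 : (S \ {j}).ncard + 1 = S.ncard := Set.ncard_diff_singleton_add_one hjS (Set.toFinite S)
  omega
theorem stmt_2 (d N k m : ℕ) (y : Fin m → EuclideanSpace ℝ (Fin d))
    -- pairwise distinct interpoint distances (ties broken, all distances distinct)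
    (hdist : ∀ i j i' j' : Fin m, i ≠ j → i' ≠ j' →
      dist (y i) (y j) = dist (y i') (y j') →
      ({i, j} : Finset (Fin m)) = ({i', j'} : Finset (Fin m)))
    -- ℝ^d is covered by N cones of opening angle π/3 (half-angle π/6) with apex
    -- at any given point
    (hcover : ∀ x : EuclideanSpace ℝ (Fin d), ∃ v : Fin N → EuclideanSpace ℝ (Fin d),
      (∀ t, v t ≠ 0) ∧ ∀ z : EuclideanSpace ℝ (Fin d), z ≠ x →
        ∃ t, ⟪z - x, v t⟫ ≥ ‖z - x‖ * ‖v t‖ * Real.cos (Real.pi / 6)) :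
    ∀ i : Fin m, ((knnGraph y k).neighborSet i).ncard ≤ k + N * k := by
  classical
  intro i
  -- distinct distances to a fixed point
  have hdd : ∀ j j' : Fin m, j ≠ i → j' ≠ i → j ≠ j' →
      dist (y j) (y i) ≠ dist (y j') (y i) := by
    intro j j' hji hj'i hjj' heq
    have h := hdist j i j' i hji hj'i heq
    have : j' ∈ ({j, i} : Finset (Fin m)) := h ▸ Finset.mem_insert_self j' {i}
    rcases Finset.mem_insert.mp this with h1 | h1
    · exact hjj' h1.symm
    · exact hj'i (Finset.mem_singleton.mp h1)
  set A : Set (Fin m) := {j | IsKNN y k i j} with hA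
  set B : Set (Fin m) := {j | IsKNN y k j i ∧ y j ≠ y i} with hB
  have hsubAB : (knnGraph y k).neighborSet i ⊆ A ∪ B := by
    intro j hj
    rw [SimpleGraph.mem_neighborSet, knnGraph, SimpleGraph.fromRel_adj] at hj
    obtain ⟨hne, h | h⟩ := hj
    · exact Or.inl h
    · by_cases hyy : y j = y i
      · left
        refine ⟨Ne.symm hne, ?_⟩
        have hk : 0 < k := lt_of_le_of_lt (Nat.zero_le _) h.2
        have hset : {l : Fin m | l ≠ i ∧ l ≠ j ∧ dist (y l) (y i) < dist (y j) (y i)} = ∅ := by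
          ext l
          simp only [Set.mem_setOf_eq, Set.mem_empty_iff_false, iff_false]
          rintro ⟨-, -, hlt⟩
          rw [hyy, dist_self] at hlt
          exact absurd hlt (not_lt.mpr dist_nonneg)
        rw [hset, Set.ncard_empty]
        exact hk
      · exact Or.inr ⟨h, hyy⟩
  have hAcard : A.ncard ≤ k := by
    apply max_count (g := fun j => dist (y j) (y i))
      (P := fun j => {l : Fin m | l ≠ i ∧ l ≠ j ∧ dist (y l) (y i) < dist (y j) (y i)})
    intro j hjA hmax
    refine ⟨?_, hjA.2⟩
    rintro l ⟨hlA, hlj⟩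
    have hlj' : l ≠ j := by simpa using hlj
    have hli : l ≠ i := hlA.1
    have hji : j ≠ i := hjA.1
    exact ⟨hli, hlj', lt_of_le_of_ne (hmax l hlA) (hdd l j hli hji hlj')⟩
  have hBcard : B.ncard ≤ N * k := by
    obtain ⟨v, hv0, hcone⟩ := hcover (y i)
    set C : Fin N → Set (Fin m) := fun t =>
      {j | j ∈ B ∧ ⟪y j - y i, v t⟫ ≥ ‖y j - y i‖ * ‖v t‖ * Real.cos (Real.pi / 6)} with hC
    have hBsub : B ⊆ ⋃ t, C t := by
      intro j hj
      obtain ⟨t, ht⟩ := hcone (y j) hj.2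
      exact Set.mem_iUnion.mpr ⟨t, hj, ht⟩
    have hCt : ∀ t, (C t).ncard ≤ k := by
      intro t
      apply max_count (g := fun j => dist (y j) (y i))
        (P := fun j => {l : Fin m | l ≠ j ∧ l ≠ i ∧ dist (y l) (y j) < dist (y i) (y j)})
      intro j hjC hmax
      refine ⟨?_, hjC.1.1.2⟩
      rintro l ⟨hlC, hlj⟩
      have hlj' : l ≠ j := by simpa using hlj
      have hli : l ≠ i := hlC.1.1.1.symm
      have hji : j ≠ i := hjC.1.1.1.symm
      have hltd : dist (y l) (y i) < dist (y j) (y i) :=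
        lt_of_le_of_ne (hmax l hlC) (hdd l j hli hji hlj')
      have h0 : 0 < ‖y l - y i‖ := by
        rw [norm_pos_iff, sub_ne_zero]; exact hlC.1.2
      have hlt' : ‖y l - y i‖ < ‖y j - y i‖ := by
        rwa [dist_eq_norm, dist_eq_norm] at hltd
      have hkey := cone_ineq (y l - y i) (y j - y i) (v t) (hv0 t) hlC.2 hjC.2 h0 hlt'
      have : y j - y i - (y l - y i) = y j - y l := by abel
      rw [this] at hkey
      refine ⟨hlj', hli, ?_⟩
      rw [dist_comm (y l) (y j), dist_comm (y i) (y j), dist_eq_norm, dist_eq_norm]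
      exact hkey
    -- sum over the cones
    have hfin : ∀ t, (C t).Finite := fun t => Set.toFinite _
    have hBfin : B.Finite := Set.toFinite _
    calc B.ncard ≤ (⋃ t, C t).ncard := Set.ncard_le_ncard hBsub (Set.toFinite _)
    _ ≤ N * k := by
        have heq : (⋃ t, C t) = ↑((Finset.univ : Finset (Fin N)).biUnion
            fun t => (hfin t).toFinset) := by
          ext x
          simp only [Set.mem_iUnion, Finset.coe_biUnion, Finset.mem_coe, Finset.mem_univ,
            Set.Finite.mem_toFinset, Set.iUnion_true]
        rw [heq, Set.ncard_coe_finset]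
        calc ((Finset.univ : Finset (Fin N)).biUnion fun t => (hfin t).toFinset).card
            ≤ (Finset.univ : Finset (Fin N)).card * k :=
              Finset.card_biUnion_le_card_mul _ _ _ (fun t _ => by
                rw [← Set.ncard_eq_toFinset_card]; exact hCt t)
        _ = N * k := by simp
  calc ((knnGraph y k).neighborSet i).ncard ≤ (A ∪ B).ncard :=
        Set.ncard_le_ncard hsubAB (Set.toFinite _)
  _ ≤ A.ncard + B.ncard := Set.ncard_union_le A B
  _ ≤ k + N * k := Nat.add_le_add hAcard hBcard
end

section
/- Let x₁,…,xₙ be points in [0,1]^d and let E be an edge set of pairs (i,j) such that every point of ℝ^d is contained in at most C of the balls B(x_i, ‖x_i − x_j‖) over (i,j) ∈ E, and |E| ≤ kn. Then the sum over (i,j) ∈ E of ‖x_i − x_j‖ is at most C' · n^((d−1)/d), where C' depends only on d, k, and C. -/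
open scoped Classical
open MeasureTheory Metric
open scoped ENNReal NNReal

theorem stmt_3 (d k C : ℕ) (hd : 1 ≤ d) :
    ∃ C' : ℝ, 0 < C' ∧
      ∀ (n : ℕ) (x : Fin n → EuclideanSpace ℝ (Fin d))
        (E : Finset (Fin n × Fin n)),
        (∀ i : Fin n, ∀ j : Fin d, x i j ∈ Set.Icc (0 : ℝ) 1) →
        (∀ y : EuclideanSpace ℝ (Fin d),
          (E.filter (fun e : Fin n × Fin n => y ∈ Metric.closedBall (x e.1) (dist (x e.1) (x e.2)))).card ≤ C) →
        E.card ≤ k * n →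
        ∑ e ∈ E, dist (x e.1) (x e.2) ≤ C' * (n : ℝ) ^ (((d : ℝ) - 1) / d) := by
  set R : ℝ := 3 * Real.sqrt d with hR
  have hRnn : 0 ≤ R := by positivity
  set M : ℝ := (C : ℝ) * R ^ d * (k : ℝ) ^ (d - 1) with hM
  have hMnn : 0 ≤ M := by positivity
  refine ⟨M + 1, by linarith, ?_⟩
  intro n x E hx hC hE
  have hdR : (0:ℝ) < d := by exact_mod_cast hd
  have hrpow_nn : (0:ℝ) ≤ (n : ℝ) ^ (((d : ℝ) - 1) / d) := Real.rpow_nonneg (by positivity) _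
  rcases E.eq_empty_or_nonempty with rfl | hne
  · simp only [Finset.sum_empty]
    positivity
  -- norms of points
  have hnorm : ∀ i, ‖x i‖ ≤ Real.sqrt d := by
    intro i
    rw [EuclideanSpace.norm_eq]
    simp only [Real.norm_eq_abs, sq_abs]
    apply Real.sqrt_le_sqrt
    calc ∑ j, x i j ^ 2 ≤ ∑ _j : Fin d, (1:ℝ) := by
          refine Finset.sum_le_sum fun j _ => ?_
          have h := hx i j
          nlinarith [h.1, h.2]
      _ = d := by simp
  have hdist : ∀ e : Fin n × Fin n, dist (x e.1) (x e.2) ≤ 2 * Real.sqrt d := by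
    intro e
    calc dist (x e.1) (x e.2) ≤ ‖x e.1‖ + ‖x e.2‖ := dist_le_norm_add_norm _ _
      _ ≤ Real.sqrt d + Real.sqrt d := add_le_add (hnorm _) (hnorm _)
      _ = 2 * Real.sqrt d := by ring
  have hsub : ∀ e : Fin n × Fin n,
      closedBall (x e.1) (dist (x e.1) (x e.2)) ⊆ closedBall (0 : EuclideanSpace ℝ (Fin d)) R := by
    intro e
    apply closedBall_subset_closedBall'
    have h1 : dist (x e.1) (0 : EuclideanSpace ℝ (Fin d)) = ‖x e.1‖ := by simp
    rw [h1]
    have := hdist e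
    have := hnorm e.1
    rw [hR]; linarith
  -- volume bound
  have key : ∑ e ∈ E, volume (closedBall (x e.1) (dist (x e.1) (x e.2)))
      ≤ (C : ℝ≥0∞) * volume (closedBall (0 : EuclideanSpace ℝ (Fin d)) R) := by
    calc ∑ e ∈ E, volume (closedBall (x e.1) (dist (x e.1) (x e.2)))
        = ∫⁻ y, (∑ e ∈ E, (closedBall (x e.1) (dist (x e.1) (x e.2))).indicator
            (fun _ => (1:ℝ≥0∞)) y) := by
          rw [MeasureTheory.lintegral_finset_sum]
          · refine Finset.sum_congr rfl fun e _ => ?_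
            rw [MeasureTheory.lintegral_indicator measurableSet_closedBall _]
            simp
          · exact fun e _ => measurable_one.indicator measurableSet_closedBall
      _ ≤ ∫⁻ y, ((closedBall (0 : EuclideanSpace ℝ (Fin d)) R).indicator
            (fun _ => (C:ℝ≥0∞)) y) := by
          refine MeasureTheory.lintegral_mono fun y => ?_
          by_cases hy : y ∈ closedBall (0 : EuclideanSpace ℝ (Fin d)) R
          · rw [Set.indicator_of_mem hy]
            calc ∑ e ∈ E, (closedBall (x e.1) (dist (x e.1) (x e.2))).indicator
                  (fun _ => (1:ℝ≥0∞)) y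
                = ∑ e ∈ E, if y ∈ closedBall (x e.1) (dist (x e.1) (x e.2))
                    then (1:ℝ≥0∞) else 0 := by
                  refine Finset.sum_congr rfl fun e _ => ?_
                  simp [Set.indicator_apply]
              _ = ((E.filter (fun e : Fin n × Fin n =>
                    y ∈ closedBall (x e.1) (dist (x e.1) (x e.2)))).card : ℝ≥0∞) := by
                  rw [Finset.sum_boole]
              _ ≤ (C : ℝ≥0∞) := by exact_mod_cast hC y
          · rw [Set.indicator_of_notMem hy]
            refine le_of_eq (Finset.sum_eq_zero fun e _ => ?_)
            exact Set.indicator_of_notMem (fun h => hy (hsub e h)) _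
      _ = (C : ℝ≥0∞) * volume (closedBall (0 : EuclideanSpace ℝ (Fin d)) R) := by
          rw [MeasureTheory.lintegral_indicator measurableSet_closedBall _,
            MeasureTheory.setLIntegral_const]
  -- turn into a real inequality on sums of r^d
  have hV : volume (ball (0 : EuclideanSpace ℝ (Fin d)) 1) ≠ 0 :=
    (measure_ball_pos _ _ one_pos).ne'
  have hV' : volume (ball (0 : EuclideanSpace ℝ (Fin d)) 1) ≠ ⊤ :=
    measure_ball_lt_top.ne
  have hsumd : ∑ e ∈ E, dist (x e.1) (x e.2) ^ d ≤ (C : ℝ) * R ^ d := by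
    have h1 : ∀ e : Fin n × Fin n,
        volume (closedBall (x e.1) (dist (x e.1) (x e.2)))
          = ENNReal.ofReal (dist (x e.1) (x e.2) ^ d)
            * volume (ball (0 : EuclideanSpace ℝ (Fin d)) 1) := by
      intro e
      rw [Measure.addHaar_closedBall volume (x e.1) dist_nonneg, finrank_euclideanSpace_fin]
    have h2 : volume (closedBall (0 : EuclideanSpace ℝ (Fin d)) R)
        = ENNReal.ofReal (R ^ d) * volume (ball (0 : EuclideanSpace ℝ (Fin d)) 1) := by
      rw [Measure.addHaar_closedBall volume _ hRnn, finrank_euclideanSpace_fin]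
    simp only [h1, h2, ← Finset.sum_mul, ← mul_assoc] at key
    have key2 : ∑ e ∈ E, ENNReal.ofReal (dist (x e.1) (x e.2) ^ d)
        ≤ (C : ℝ≥0∞) * ENNReal.ofReal (R ^ d) :=
      (ENNReal.mul_le_mul_iff_left hV hV').mp key
    rw [← ENNReal.ofReal_sum_of_nonneg (fun e _ => by positivity),
      ← ENNReal.ofReal_natCast, ← ENNReal.ofReal_mul (by positivity)] at key2
    exact (ENNReal.ofReal_le_ofReal_iff (by positivity)).mp key2
  -- Hölder / power mean
  set S : ℝ := ∑ e ∈ E, dist (x e.1) (x e.2) with hS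
  have hSnn : 0 ≤ S := Finset.sum_nonneg fun e _ => dist_nonneg
  have hd1 : d - 1 + 1 = d := Nat.succ_pred_eq_of_pos hd
  have hpm : S ^ d / (E.card : ℝ) ^ (d - 1) ≤ ∑ e ∈ E, dist (x e.1) (x e.2) ^ d := by
    have := pow_sum_div_card_le_sum_pow (f := fun e : Fin n × Fin n => dist (x e.1) (x e.2))
      (s := E) (fun e _ => dist_nonneg) (d - 1)
    rw [hd1] at this
    exact this
  have hcardpos : (0:ℝ) < (E.card : ℝ) ^ (d - 1) := by
    have : 0 < E.card := Finset.card_pos.mpr hne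
    positivity
  have hSd : S ^ d ≤ M * (n : ℝ) ^ (d - 1) := by
    have h3 : S ^ d ≤ (E.card : ℝ) ^ (d - 1) * ((C : ℝ) * R ^ d) := by
      rw [mul_comm, ← div_le_iff₀ hcardpos]
      exact le_trans hpm hsumd
    have h4 : (E.card : ℝ) ^ (d - 1) ≤ ((k : ℝ) * n) ^ (d - 1) := by
      apply pow_le_pow_left₀ (by positivity)
      exact_mod_cast hE
    calc S ^ d ≤ (E.card : ℝ) ^ (d - 1) * ((C : ℝ) * R ^ d) := h3
      _ ≤ ((k : ℝ) * n) ^ (d - 1) * ((C : ℝ) * R ^ d) := by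
          apply mul_le_mul_of_nonneg_right h4 (by positivity)
      _ = M * (n : ℝ) ^ (d - 1) := by rw [hM, mul_pow]; ring
  -- take d-th roots
  have hdne : (d : ℝ) ≠ 0 := ne_of_gt hdR
  have hroot : S ≤ (M * (n : ℝ) ^ (d - 1)) ^ ((1:ℝ) / d) := by
    have h5 : S = (S ^ d) ^ ((1:ℝ) / d) := by
      rw [← Real.rpow_natCast S d, ← Real.rpow_mul hSnn]
      rw [mul_one_div, div_self hdne, Real.rpow_one]
    rw [h5]
    exact Real.rpow_le_rpow (by positivity) hSd (by positivity)
  have hsplit : (M * (n : ℝ) ^ (d - 1)) ^ ((1:ℝ) / d)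
      = M ^ ((1:ℝ) / d) * (n : ℝ) ^ (((d : ℝ) - 1) / d) := by
    rw [Real.mul_rpow hMnn (by positivity)]
    congr 1
    rw [← Real.rpow_natCast (n:ℝ) (d - 1), ← Real.rpow_mul (by positivity)]
    congr 1
    rw [Nat.cast_sub hd]
    ring
  have hMroot : M ^ ((1:ℝ) / d) ≤ M + 1 := by
    rcases le_or_gt M 1 with h | h
    · calc M ^ ((1:ℝ) / d) ≤ 1 ^ ((1:ℝ) / d) := Real.rpow_le_rpow hMnn h (by positivity)
        _ = 1 := Real.one_rpow _
        _ ≤ M + 1 := by linarith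
    · have hexp : (1:ℝ) / d ≤ 1 := by
        rw [div_le_one hdR]; exact_mod_cast hd
      have := Real.rpow_le_rpow_of_exponent_le h.le hexp
      rw [Real.rpow_one] at this
      linarith
  calc S ≤ (M * (n : ℝ) ^ (d - 1)) ^ ((1:ℝ) / d) := hroot
    _ = M ^ ((1:ℝ) / d) * (n : ℝ) ^ (((d : ℝ) - 1) / d) := hsplit
    _ ≤ (M + 1) * (n : ℝ) ^ (((d : ℝ) - 1) / d) :=
        mul_le_mul_of_nonneg_right hMroot hrpow_nn
end

section
/- If each of n vertices connects to exactly k ≥ 2 other uniformly random vertices (the Ulam random graph), then the probability that the resulting undirected graph is disconnected is at most C_k · n^{−(k−1)(k+1)} for n large, where C_k depends only on k. -/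
/-- Sample space: each vertex `v` picks a `k`-subset of the other `n-1` vertices. -/
def PickSpace (n k : ℕ) : Type :=
  ∀ v : Fin n, {s : Finset (Fin n) // s.card = k ∧ v ∉ s}

/-- The (undirected) Ulam random graph: `u ~ v` iff `u` picked `v` or `v` picked `u`. -/
def ulamGraph (n k : ℕ) (ω : PickSpace n k) : SimpleGraph (Fin n) :=
  SimpleGraph.fromRel (fun u v => u ∈ (ω v).1 ∨ v ∈ (ω u).1)

/-!
A disconnected graph on `n` vertices has a union of components `S` with `|S| ≤ n / 2`; no pick
leaves `S` or its complement, which forces `|S| ≥ k + 1`. The number of pick configurations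
isolating a fixed `S` of size `ℓ` is `C(ℓ-1,k)^ℓ C(n-ℓ-1,k)^(n-ℓ)`, and
`C(m-1,k) ≤ (m/n)^k C(n-1,k)`, so the fraction of configurations isolating some set of size `ℓ`
is at most `C(n,ℓ) x^(kℓ) (1-x)^(k(n-ℓ))` with `x = ℓ/n`. Since `C(n,ℓ) x^ℓ (1-x)^(n-ℓ) ≤ 1` is a
single binomial term, this is at most `x^((k-1)ℓ)`, and for `k + 1 ≤ ℓ ≤ n/2` that is at most
`2^(k+1) (ℓ/n)^((k-1)(k+1)) 2^(-ℓ)`, whose sum over `ℓ` is `O(n^(-(k-1)(k+1)))`.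
-/

open Finset

theorem Nat.choose_pred_mul_pow_le {m n : ℕ} (k : ℕ) (h : m ≤ n) :
    (m - 1).choose k * n ^ k ≤ (n - 1).choose k * m ^ k := by
  have hdesc : (m - 1).descFactorial k * n ^ k ≤ (n - 1).descFactorial k * m ^ k := by
    have hprod (a b : ℕ) : a.descFactorial k * b ^ k = ∏ i ∈ range k, (a - i) * b := by
      rw [prod_mul_distrib, prod_const, card_range, Nat.descFactorial_eq_prod_range]
    rw [hprod, hprod]
    refine prod_le_prod' fun i _ => ?_
    rw [Nat.sub_sub, Nat.sub_sub, Nat.sub_mul, Nat.sub_mul, mul_comm m n]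
    exact Nat.sub_le_sub_left (Nat.mul_le_mul_left _ h) _
  rw [Nat.descFactorial_eq_factorial_mul_choose, Nat.descFactorial_eq_factorial_mul_choose,
    mul_assoc, mul_assoc] at hdesc
  exact Nat.le_of_mul_le_mul_left hdesc (Nat.factorial_pos k)

theorem choose_pred_le_div_pow_mul {m n : ℕ} (k : ℕ) (h : m ≤ n) (hn : 0 < n) :
    ((m - 1).choose k : ℝ) ≤ ((m : ℝ) / n) ^ k * (n - 1).choose k := by
  rw [div_pow, div_mul_eq_mul_div, le_div_iff₀ (by positivity), mul_comm ((m : ℝ) ^ k)]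
  exact_mod_cast Nat.choose_pred_mul_pow_le k h

theorem pow_mul_pow_mul_choose_le_add_pow {R : Type*} [CommSemiring R] [PartialOrder R]
    [IsOrderedRing R] {x y : R} (hx : 0 ≤ x) (hy : 0 ≤ y) (n ℓ : ℕ) :
    x ^ ℓ * y ^ (n - ℓ) * n.choose ℓ ≤ (x + y) ^ n := by
  rcases le_or_gt ℓ n with h | h
  · rw [add_pow]
    exact single_le_sum (f := fun i => x ^ i * y ^ (n - i) * (n.choose i : R))
      (fun i _ => by positivity) (mem_range.2 (Nat.lt_succ_of_le h))
  · rw [Nat.choose_eq_zero_of_lt h, Nat.cast_zero, mul_zero]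
    positivity

theorem choose_mul_choose_pow_mul_choose_pow_le {n k ℓ : ℕ} (hk : 1 ≤ k) (hℓ : ℓ ≤ n)
    (hn : 0 < n) :
    (n.choose ℓ * ((ℓ - 1).choose k) ^ ℓ * ((n - ℓ - 1).choose k) ^ (n - ℓ) : ℝ)
      ≤ ((ℓ : ℝ) / n) ^ ((k - 1) * ℓ) * ((n - 1).choose k) ^ n := by
  set x : ℝ := ℓ / n
  set Q : ℝ := ↑((n - 1).choose k)
  have hx0 : 0 ≤ x := by positivity
  have hx1 : x ≤ 1 := div_le_one_of_le₀ (by exact_mod_cast hℓ) (by positivity)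
  obtain ⟨y, hy⟩ : ∃ y : ℝ, y = 1 - x := ⟨_, rfl⟩
  have hy0 : 0 ≤ y := hy ▸ sub_nonneg.2 hx1
  have hy1 : y ≤ 1 := hy ▸ sub_le_self 1 hx0
  have hcompl : ((n - ℓ : ℕ) : ℝ) / n = y := by
    rw [hy, Nat.cast_sub hℓ, sub_div, div_self (by positivity)]
  have hbinom : x ^ ℓ * y ^ (n - ℓ) * n.choose ℓ ≤ 1 := by
    simpa [hy] using pow_mul_pow_mul_choose_le_add_pow hx0 hy0 n ℓ
  obtain ⟨j, rfl⟩ := Nat.exists_eq_add_of_le' hk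
  obtain ⟨d, rfl⟩ := Nat.exists_eq_add_of_le hℓ
  simp only [Nat.add_sub_cancel_left, Nat.add_sub_cancel] at hbinom hcompl ⊢
  calc ((ℓ + d).choose ℓ * ((ℓ - 1).choose (j + 1)) ^ ℓ * ((d - 1).choose (j + 1)) ^ d : ℝ)
      ≤ (ℓ + d).choose ℓ * (x ^ (j + 1) * Q) ^ ℓ * (y ^ (j + 1) * Q) ^ d := by
        gcongr
        · exact choose_pred_le_div_pow_mul _ (Nat.le_add_right ℓ d) hn
        · rw [← hcompl]
          exact choose_pred_le_div_pow_mul _ (Nat.le_add_left d ℓ) hn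
    _ = (x ^ ℓ * y ^ d * (ℓ + d).choose ℓ) * (y ^ d) ^ j
          * (x ^ (j * ℓ) * Q ^ (ℓ + d)) := by ring
    _ ≤ 1 * 1 * (x ^ (j * ℓ) * Q ^ (ℓ + d)) := by
        gcongr
        exact pow_le_one₀ (by positivity) (pow_le_one₀ hy0 hy1)
    _ = x ^ (j * ℓ) * Q ^ (ℓ + d) := by ring

theorem pow_le_two_pow_mul_pow_mul_half_pow {x : ℝ} (hx0 : 0 ≤ x) (hx : x ≤ 1 / 2)
    {k ℓ : ℕ} (hk : 2 ≤ k) (hℓ : k + 1 ≤ ℓ) :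
    x ^ ((k - 1) * ℓ) ≤ 2 ^ (k + 1) * x ^ ((k - 1) * (k + 1)) * (1 / 2) ^ ℓ := by
  obtain ⟨j, rfl⟩ := Nat.exists_eq_add_of_le hℓ
  calc x ^ ((k - 1) * (k + 1 + j))
      = x ^ ((k - 1) * (k + 1)) * x ^ ((k - 1) * j) := by rw [Nat.mul_add, pow_add]
    _ ≤ x ^ ((k - 1) * (k + 1)) * (1 / 2) ^ j := by
        gcongr
        calc x ^ ((k - 1) * j) ≤ x ^ j :=
              pow_le_pow_of_le_one hx0 (hx.trans (by norm_num))
                (Nat.le_mul_of_pos_left j (by omega))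
          _ ≤ (1 / 2) ^ j := by gcongr
    _ = 2 ^ (k + 1) * x ^ ((k - 1) * (k + 1)) * (1 / 2) ^ (k + 1 + j) := by
        rw [pow_add (1 / 2 : ℝ), one_div_pow (α := ℝ) 2 (k + 1)]
        field_simp

theorem sum_Icc_div_pow_le {k : ℕ} (hk : 2 ≤ k) (n : ℕ) :
    ∑ ℓ ∈ Icc (k + 1) (n / 2), ((ℓ : ℝ) / n) ^ ((k - 1) * ℓ)
      ≤ 2 ^ (k + 1) * (∑' ℓ : ℕ, (ℓ : ℝ) ^ ((k - 1) * (k + 1)) * (1 / 2) ^ ℓ)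
        / (n : ℝ) ^ ((k - 1) * (k + 1)) := by
  set m := (k - 1) * (k + 1)
  have hsummable : Summable fun ℓ : ℕ => (ℓ : ℝ) ^ m * (1 / 2) ^ ℓ :=
    summable_pow_mul_geometric_of_norm_lt_one m (by norm_num)
  calc ∑ ℓ ∈ Icc (k + 1) (n / 2), ((ℓ : ℝ) / n) ^ ((k - 1) * ℓ)
      ≤ ∑ ℓ ∈ Icc (k + 1) (n / 2), 2 ^ (k + 1) / (n : ℝ) ^ m * ((ℓ : ℝ) ^ m * (1 / 2) ^ ℓ) := by
        refine sum_le_sum fun ℓ hℓ => ?_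
        obtain ⟨hkℓ, hℓn⟩ := mem_Icc.1 hℓ
        have hhalf : (ℓ : ℝ) / n ≤ 1 / 2 := by
          rw [div_le_div_iff₀ (by norm_cast; omega) two_pos]
          exact_mod_cast (by omega : ℓ * 2 ≤ 1 * n)
        calc ((ℓ : ℝ) / n) ^ ((k - 1) * ℓ)
            ≤ 2 ^ (k + 1) * ((ℓ : ℝ) / n) ^ m * (1 / 2) ^ ℓ :=
              pow_le_two_pow_mul_pow_mul_half_pow (by positivity) hhalf hk hkℓ
          _ = _ := by rw [div_pow]; ring
    _ = 2 ^ (k + 1) / (n : ℝ) ^ m * ∑ ℓ ∈ Icc (k + 1) (n / 2), (ℓ : ℝ) ^ m * (1 / 2) ^ ℓ :=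
        (mul_sum _ _ _).symm
    _ ≤ 2 ^ (k + 1) / (n : ℝ) ^ m * ∑' ℓ : ℕ, (ℓ : ℝ) ^ m * (1 / 2) ^ ℓ := by
        gcongr
        exact hsummable.sum_le_tsum _ fun ℓ _ => by positivity
    _ = _ := by ring

instance (n k : ℕ) : Fintype (PickSpace n k) :=
  inferInstanceAs (Fintype (∀ v : Fin n, {s : Finset (Fin n) // #s = k ∧ v ∉ s}))

theorem ulamGraph_adj_of_mem {n k : ℕ} {ω : PickSpace n k} {v w : Fin n} (h : w ∈ (ω v).1) :
    (ulamGraph n k ω).Adj v w := by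
  rw [ulamGraph, SimpleGraph.fromRel_adj]
  exact ⟨fun hvw => (ω v).2.2 (hvw ▸ h), Or.inl (Or.inr h)⟩

namespace PickSpace

variable {n k : ℕ}

theorem card_eq (n k : ℕ) : Nat.card (PickSpace n k) = ((n - 1).choose k) ^ n := by
  classical
  have hpick (v : Fin n) : Nat.card {s : Finset (Fin n) // #s = k ∧ v ∉ s} = (n - 1).choose k := by
    have hfilter : ({s | #s = k ∧ v ∉ s} : Finset (Finset (Fin n)))
        = powersetCard k (univ.erase v) := by
      ext s
      simp only [mem_filter, mem_univ, true_and, mem_powersetCard, subset_erase, subset_univ]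
      tauto
    rw [Nat.card_eq_fintype_card, Fintype.card_subtype, hfilter, card_powersetCard,
      card_erase_of_mem (mem_univ v), card_univ, Fintype.card_fin]
  rw [PickSpace, Nat.card_pi, Fintype.prod_congr _ _ hpick, prod_const, card_univ,
    Fintype.card_fin]

def IsIsolated (ω : PickSpace n k) (S : Finset (Fin n)) : Prop :=
  ∀ v w, w ∈ (ω v).1 → (v ∈ S ↔ w ∈ S)

variable {ω : PickSpace n k} {S : Finset (Fin n)}

theorem IsIsolated.compl (h : ω.IsIsolated S) : ω.IsIsolated Sᶜ := fun v w hw => by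
  simpa only [mem_compl] using not_congr (h v w hw)

theorem IsIsolated.lt_card (h : ω.IsIsolated S) (hS : S.Nonempty) : k < #S := by
  obtain ⟨v, hv⟩ := hS
  have hsub : (ω v).1 ⊆ S.erase v := fun w hw =>
    mem_erase.2 ⟨fun hwv => (ω v).2.2 (hwv ▸ hw), (h v w hw).1 hv⟩
  have := card_le_card hsub
  rw [(ω v).2.1, card_erase_of_mem hv] at this
  have := card_pos.2 ⟨v, hv⟩
  omega

theorem card_isIsolated_le (S : Finset (Fin n)) :
    Nat.card {ω : PickSpace n k // ω.IsIsolated S}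
      ≤ ((#S - 1).choose k) ^ #S * ((n - #S - 1).choose k) ^ (n - #S) := by
  classical
  set T : Fin n → Finset (Fin n) := fun v => if v ∈ S then S else Sᶜ
  have hpicks (ω : PickSpace n k) (hω : ω.IsIsolated S) (v : Fin n) :
      (ω v).1 ∈ powersetCard k ((T v).erase v) := by
    refine mem_powersetCard.2 ⟨fun w hw => mem_erase.2 ⟨fun hwv => (ω v).2.2 (hwv ▸ hw), ?_⟩,
      (ω v).2.1⟩
    by_cases hv : v ∈ S
    · simpa [T, hv] using (hω v w hw).1 hv
    · simpa [T, hv] using mt (hω v w hw).2 hv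
  rw [Nat.card_eq_fintype_card, Fintype.card_subtype]
  calc #{ω : PickSpace n k | ω.IsIsolated S}
      ≤ #(Fintype.piFinset fun v => powersetCard k ((T v).erase v)) :=
        card_le_card_of_injOn (fun ω v => (ω v).1)
          (fun ω hω => Fintype.mem_piFinset.2 (hpicks ω (mem_filter.1 hω).2))
          (fun ω _ ω' _ h => funext fun v => Subtype.ext (congrFun h v))
    _ = ∏ v, (#((T v).erase v)).choose k := by
        simp only [Fintype.card_piFinset, card_powersetCard]
    _ = _ := by
        rw [← prod_mul_prod_compl S]
        congr 1
        · exact prod_eq_pow_card fun v hv => by simp [T, hv, card_erase_of_mem]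
        · have hcompl : #Sᶜ = n - #S := by rw [card_compl, Fintype.card_fin]
          rw [← hcompl]
          refine prod_eq_pow_card fun v hv => ?_
          simp [T, mem_compl.1 hv, card_erase_of_mem hv, hcompl]

theorem exists_isIsolated_of_not_connected (hn : 0 < n)
    (h : ¬ (ulamGraph n k ω).Connected) :
    ∃ S : Finset (Fin n), k < #S ∧ 2 * #S ≤ n ∧ ω.IsIsolated S := by
  classical
  have : Nonempty (Fin n) := ⟨⟨0, hn⟩⟩
  obtain ⟨u, v, huv⟩ : ∃ u v, ¬ (ulamGraph n k ω).Reachable u v := by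
    simpa [SimpleGraph.connected_iff, SimpleGraph.Preconnected] using h
  set S : Finset (Fin n) := {w | (ulamGraph n k ω).Reachable u w}
  have hS : ω.IsIsolated S := fun a w hw => by
    have hadj := ulamGraph_adj_of_mem hw
    simp only [S, mem_filter, mem_univ, true_and]
    exact ⟨fun h => h.trans hadj.reachable, fun h => h.trans hadj.symm.reachable⟩
  have hu : u ∈ S := by simp [S]
  have hv : v ∈ Sᶜ := by simpa [S] using huv
  rcases le_total (2 * #S) n with hle | hge
  · exact ⟨S, hS.lt_card ⟨u, hu⟩, hle, hS⟩
  · refine ⟨Sᶜ, hS.compl.lt_card ⟨v, hv⟩, ?_, hS.compl⟩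
    rw [card_compl, Fintype.card_fin]
    omega

theorem card_not_connected_le (hn : 0 < n) :
    Nat.card {ω : PickSpace n k // ¬ (ulamGraph n k ω).Connected}
      ≤ ∑ ℓ ∈ Icc (k + 1) (n / 2),
          n.choose ℓ * ((ℓ - 1).choose k) ^ ℓ * ((n - ℓ - 1).choose k) ^ (n - ℓ) := by
  classical
  set f : ℕ → ℕ := fun ℓ => ((ℓ - 1).choose k) ^ ℓ * ((n - ℓ - 1).choose k) ^ (n - ℓ)
  set 𝒮 : Finset (Finset (Fin n)) := {S | #S ∈ Icc (k + 1) (n / 2)}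
  have hcover : ({ω | ¬ (ulamGraph n k ω).Connected} : Finset (PickSpace n k))
      ⊆ 𝒮.biUnion fun S => {ω | ω.IsIsolated S} := fun ω hω => by
    obtain ⟨S, hkS, hSn, hS⟩ := exists_isIsolated_of_not_connected hn (mem_filter.1 hω).2
    exact mem_biUnion.2
      ⟨S, mem_filter.2 ⟨mem_univ S, mem_Icc.2 ⟨hkS, by omega⟩⟩, mem_filter.2 ⟨mem_univ ω, hS⟩⟩
  rw [Nat.card_eq_fintype_card, Fintype.card_subtype]
  calc _ ≤ #(𝒮.biUnion fun S => {ω : PickSpace n k | ω.IsIsolated S}) := card_le_card hcover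
    _ ≤ ∑ S ∈ 𝒮, #{ω : PickSpace n k | ω.IsIsolated S} := card_biUnion_le
    _ ≤ ∑ S ∈ 𝒮, f #S := sum_le_sum fun S _ => by
        simpa only [Nat.card_eq_fintype_card, Fintype.card_subtype] using card_isIsolated_le S
    _ = ∑ ℓ ∈ Icc (k + 1) (n / 2), ∑ S ∈ 𝒮 with #S = ℓ, f #S :=
        (sum_fiberwise_of_maps_to (fun S hS => (mem_filter.1 hS).2) _).symm
    _ ≤ ∑ ℓ ∈ Icc (k + 1) (n / 2), n.choose ℓ * f ℓ := sum_le_sum fun ℓ _ => by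
        rw [sum_congr rfl fun S hS => by rw [(mem_filter.1 hS).2], sum_const, smul_eq_mul]
        gcongr
        calc #{S ∈ 𝒮 | #S = ℓ} ≤ #(powersetCard ℓ (univ : Finset (Fin n))) :=
              card_le_card fun S hS => mem_powersetCard.2 ⟨subset_univ S, (mem_filter.1 hS).2⟩
          _ = n.choose ℓ := by rw [card_powersetCard, card_univ, Fintype.card_fin]
    _ = _ := sum_congr rfl fun ℓ _ => (mul_assoc _ _ _).symm

end PickSpace

/-- under the uniform measure on `PickSpace n k`, the Ulam random graph
is disconnected with probability at most `C_k · n^{-(k-1)(k+1)}` for large `n`;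
stated as a counting inequality. -/
theorem stmt_17 (k : ℕ) (hk : 2 ≤ k) :
    ∃ C : ℝ, 0 < C ∧ ∃ N : ℕ, ∀ n : ℕ, N ≤ n →
      (Nat.card {ω : PickSpace n k // ¬ (ulamGraph n k ω).Connected} : ℝ)
        ≤ C / (n : ℝ) ^ ((k - 1) * (k + 1)) * Nat.card (PickSpace n k) := by
  set B := ∑' ℓ : ℕ, (ℓ : ℝ) ^ ((k - 1) * (k + 1)) * (1 / 2) ^ ℓ
  have hB : 0 < B :=
    (summable_pow_mul_geometric_of_norm_lt_one (R := ℝ) ((k - 1) * (k + 1)) (r := 1 / 2)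
      (by norm_num)).tsum_pos (fun ℓ => by positivity) 1 (by norm_num)
  refine ⟨2 ^ (k + 1) * B, by positivity, 1, fun n hn => ?_⟩
  rw [PickSpace.card_eq, Nat.cast_pow]
  calc (Nat.card {ω : PickSpace n k // ¬ (ulamGraph n k ω).Connected} : ℝ)
      ≤ ∑ ℓ ∈ Icc (k + 1) (n / 2),
          (n.choose ℓ * ((ℓ - 1).choose k) ^ ℓ * ((n - ℓ - 1).choose k) ^ (n - ℓ) : ℝ) := by
        exact_mod_cast PickSpace.card_not_connected_le hn
    _ ≤ ∑ ℓ ∈ Icc (k + 1) (n / 2), ((ℓ : ℝ) / n) ^ ((k - 1) * ℓ) * ((n - 1).choose k) ^ n :=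
        sum_le_sum fun ℓ hℓ => choose_mul_choose_pow_mul_choose_pow_le (by omega)
          (by have := (mem_Icc.1 hℓ).2; omega) hn
    _ = (∑ ℓ ∈ Icc (k + 1) (n / 2), ((ℓ : ℝ) / n) ^ ((k - 1) * ℓ)) * ((n - 1).choose k) ^ n :=
        (sum_mul _ _ _).symm
    _ ≤ 2 ^ (k + 1) * B / (n : ℝ) ^ ((k - 1) * (k + 1)) * ((n - 1).choose k) ^ n := by
        gcongr
        exact sum_Icc_div_pow_le hk n
end
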